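/- arXiv:1906.04933 — 2 statements merged into one kernel-verified Lean document; each statement's English description precedes it below -/
import Mathlib

section
/- Let (Ω, F, P) be a probability space, ẑ : Ω → [0,1] a random variable, and A ∈ F an event with 0 < P(A) < 1. Define the overconfidence o = E[ẑ | Aᶜ] and the underconfidence u = E[1 − ẑ | A], and let E[1_A | ẑ] denote the conditional expectation of 1_A given σ(ẑ). Then E[ẑ − E[1_A | ẑ]] = o · P(Aᶜ) − u · P(A). -/
/-!
Since `E[E[1_A | ẑ]] = P(A)`, the left side is `E[ẑ] − P(A)`. Splitting `E[ẑ]` over `A` and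
`Aᶜ`, the part over `Aᶜ` is `o · P(Aᶜ)` and the part over `A` is `P(A) − u · P(A)`.
-/

open MeasureTheory ProbabilityTheory

theorem integral_cond_mul_toReal {Ω : Type*} [MeasurableSpace Ω] {μ : Measure Ω}
    [IsFiniteMeasure μ] (f : Ω → ℝ) (s : Set Ω) :
    (∫ x, f x ∂μ[|s]) * (μ s).toReal = ∫ x in s, f x ∂μ := by
  by_cases hs : μ s = 0
  · simp [hs, Measure.restrict_eq_zero.mpr hs]
  rw [ProbabilityTheory.cond, integral_smul_measure, ENNReal.toReal_inv, smul_eq_mul, mul_comm,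
    ← mul_assoc, mul_inv_cancel₀ (ENNReal.toReal_ne_zero.mpr ⟨hs, measure_ne_top μ s⟩), one_mul]

theorem integral_sub_condExp_indicator_one {Ω : Type*} {m m₀ : MeasurableSpace Ω}
    {μ : Measure[m₀] Ω} [IsFiniteMeasure μ] (hm : m ≤ m₀) {z : Ω → ℝ} (hz : Integrable z μ)
    {A : Set Ω} (hA : MeasurableSet A) :
    ∫ ω, (z ω - (μ[A.indicator (fun _ => (1 : ℝ)) | m]) ω) ∂μ
      = ∫ ω, z ω ∂μ - (μ A).toReal := by
  rw [integral_sub hz integrable_condExp, integral_condExp hm, integral_indicator_const _ hA,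
    smul_eq_mul, mul_one, measureReal_def]

theorem mean_miscalibration_eq_over_minus_under_general
    {Ω : Type*} [MeasurableSpace Ω] (μ : Measure Ω) [IsProbabilityMeasure μ]
    (z : Ω → ℝ) (hz_meas : Measurable z) (hz01 : ∀ ω, z ω ∈ Set.Icc (0 : ℝ) 1)
    (A : Set Ω) (hA : MeasurableSet A)
    (o u : ℝ)
    (ho : o = ∫ ω, z ω ∂(μ[|Aᶜ]))
    (hu : u = ∫ ω, (1 - z ω) ∂(μ[|A])) :
    ∫ ω, (z ω -
        (μ[A.indicator (fun _ => (1 : ℝ)) | MeasurableSpace.comap z Real.measurableSpace]) ω) ∂μ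
      = o * (μ Aᶜ).toReal - u * (μ A).toReal := by
  have hz : Integrable z μ := .of_mem_Icc 0 1 hz_meas.aemeasurable (.of_forall hz01)
  have hu' : u * (μ A).toReal = (μ A).toReal - ∫ ω in A, z ω ∂μ := by
    rw [hu, integral_cond_mul_toReal,
      integral_sub (integrable_const 1).integrableOn hz.integrableOn, setIntegral_const,
      smul_eq_mul, mul_one, measureReal_def]
  rw [integral_sub_condExp_indicator_one hz_meas.comap_le hz hA, ho, integral_cond_mul_toReal,
    hu', ← integral_add_compl hA hz]
  ring

/-- `E[ẑ − E[1_A | ẑ]] = o · P(Aᶜ) − u · P(A)`. -/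
theorem mean_miscalibration_eq_over_minus_under
    {Ω : Type*} [MeasurableSpace Ω] (μ : Measure Ω) [IsProbabilityMeasure μ]
    (z : Ω → ℝ) (hz_meas : Measurable z) (hz01 : ∀ ω, z ω ∈ Set.Icc (0 : ℝ) 1)
    (A : Set Ω) (hA : MeasurableSet A) (hA0 : 0 < μ A) (hA1 : μ A < 1)
    (o u : ℝ)
    (ho : o = ∫ ω, z ω ∂(μ[|Aᶜ]))
    (hu : u = ∫ ω, (1 - z ω) ∂(μ[|A])) :
    ∫ ω, (z ω -
        (μ[A.indicator (fun _ => (1 : ℝ)) | MeasurableSpace.comap z Real.measurableSpace]) ω) ∂μ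
      = o * (μ Aᶜ).toReal - u * (μ A).toReal :=
  mean_miscalibration_eq_over_minus_under_general μ z hz_meas hz01 A hA o u ho hu
end

section
/- Let (Ω, F, P) be a probability space, ẑ : Ω → [0,1] a random variable, and A ∈ F an event with 0 < P(A) < 1. Define the overconfidence o = E[ẑ | Aᶜ] and the underconfidence u = E[1 − ẑ | A]. If the classifier is perfectly calibrated, i.e. E[1_A | ẑ] = ẑ almost surely (where E[1_A | ẑ] is the conditional expectation of 1_A given σ(ẑ)), then o · P(Aᶜ) = u · P(A); equivalently, the odds P(A)/P(Aᶜ) of making a correct prediction equal the ratio o/u between over- and underconfidence whenever u > 0. -/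
/-!
Calibration makes the mean confidence equal to the accuracy: `E[ẑ] = E[E[1_A | ẑ]] = P(A)`.
Splitting `E[ẑ]` over `A` and `Aᶜ` gives `E[ẑ; Aᶜ] = P(A) - E[ẑ; A] = E[1 - ẑ; A]`, and these two
sides are exactly `o · P(Aᶜ)` and `u · P(A)`.
-/

open MeasureTheory ProbabilityTheory

theorem integral_eq_of_condExp_ae_eq {α E : Type*} [NormedAddCommGroup E] [NormedSpace ℝ E]
    [CompleteSpace E] {m m₀ : MeasurableSpace α} {μ : Measure α} {f g : α → E} (hm : m ≤ m₀)
    [SigmaFinite (μ.trim hm)] (h : μ[f | m] =ᵐ[μ] g) :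
    ∫ x, g x ∂μ = ∫ x, f x ∂μ :=
  (integral_congr_ae h).symm.trans (integral_condExp hm)

theorem measureReal_smul_integral_cond {α E : Type*} [NormedAddCommGroup E] [NormedSpace ℝ E]
    [MeasurableSpace α] {μ : Measure α} [IsFiniteMeasure μ] (s : Set α) (f : α → E) :
    μ.real s • ∫ x, f x ∂μ[|s] = ∫ x in s, f x ∂μ := by
  by_cases hs : μ s = 0
  · simp [measureReal_def, hs, Measure.restrict_eq_zero.mpr hs]
  · rw [ProbabilityTheory.cond, integral_smul_measure, smul_smul, ENNReal.toReal_inv,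
      measureReal_def, mul_inv_cancel₀ (ENNReal.toReal_ne_zero.mpr ⟨hs, measure_ne_top μ s⟩),
      one_smul]

theorem perfect_calibration_odds_general
    {Ω : Type*} [MeasurableSpace Ω] (μ : Measure Ω) [IsProbabilityMeasure μ]
    (z : Ω → ℝ) (hz_meas : Measurable z)
    (A : Set Ω) (hA : MeasurableSet A) (hA1 : μ A < 1)
    (o u : ℝ)
    (ho : o = ∫ ω, z ω ∂(μ[|Aᶜ]))
    (hu : u = ∫ ω, (1 - z ω) ∂(μ[|A]))
    (hcal : (μ[A.indicator (fun _ => (1 : ℝ)) | MeasurableSpace.comap z Real.measurableSpace])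
      =ᵐ[μ] z) :
    o * (μ Aᶜ).toReal = u * (μ A).toReal ∧
      (0 < u → (μ A).toReal / (μ Aᶜ).toReal = o / u) := by
  simp only [← measureReal_def]
  have hz : Integrable z μ := integrable_condExp.congr hcal
  have hmean : ∫ ω, z ω ∂μ = μ.real A := by
    rw [integral_eq_of_condExp_ae_eq hz_meas.comap_le hcal, integral_indicator_const _ hA,
      smul_eq_mul, mul_one]
  have hover : o * μ.real Aᶜ = ∫ ω in Aᶜ, z ω ∂μ := by
    rw [ho, mul_comm, ← smul_eq_mul, measureReal_smul_integral_cond]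
  have hunder : u * μ.real A = μ.real A - ∫ ω in A, z ω ∂μ := by
    rw [hu, mul_comm, ← smul_eq_mul, measureReal_smul_integral_cond,
      integral_sub (integrable_const 1).integrableOn hz.integrableOn, setIntegral_const,
      smul_eq_mul, mul_one]
  have hodds : o * μ.real Aᶜ = u * μ.real A := by
    linarith [integral_add_compl hA hz]
  have hAc : μ.real Aᶜ ≠ 0 := by
    rw [measureReal_compl hA, probReal_univ]
    exact sub_ne_zero.mpr (ENNReal.toReal_lt_of_lt_ofReal (by simpa using hA1)).ne'
  refine ⟨hodds, fun hu0 => ?_⟩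
  rw [div_eq_div_iff hAc hu0.ne']
  linarith

/-- For a perfectly calibrated classifier, `o · P(Aᶜ) = u · P(A)`; equivalently the odds of a
correct prediction equal the ratio between over- and underconfidence whenever `u > 0`. -/
theorem perfect_calibration_odds
    {Ω : Type*} [MeasurableSpace Ω] (μ : Measure Ω) [IsProbabilityMeasure μ]
    (z : Ω → ℝ) (hz_meas : Measurable z) (hz01 : ∀ ω, z ω ∈ Set.Icc (0 : ℝ) 1)
    (A : Set Ω) (hA : MeasurableSet A) (hA0 : 0 < μ A) (hA1 : μ A < 1)
    (o u : ℝ)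
    (ho : o = ∫ ω, z ω ∂(μ[|Aᶜ]))
    (hu : u = ∫ ω, (1 - z ω) ∂(μ[|A]))
    (hcal : (μ[A.indicator (fun _ => (1 : ℝ)) | MeasurableSpace.comap z Real.measurableSpace])
      =ᵐ[μ] z) :
    o * (μ Aᶜ).toReal = u * (μ A).toReal ∧
      (0 < u → (μ A).toReal / (μ Aᶜ).toReal = o / u) :=
  perfect_calibration_odds_general μ z hz_meas A hA hA1 o u ho hu hcal
end
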